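/- arXiv:2402.15489 — 2 statements merged into one kernel-verified Lean document; each statement's English description precedes it below -/
import Mathlib

section
/- Let B ∈ ℝ^{K×K} be symmetric with full rank K, written B = ν I_{p,q} νᵀ with ν ∈ ℝ^{K×K} invertible and I_{p,q} = diag(1,…,1,−1,…,−1) (p + q = K), and let π ∈ ℝ^K have strictly positive entries. Set Δ := νᵀ diag(π) ν. Then: (i) writing ν = V|Σ|^{1/2} with V ∈ ℝ^{K×K} orthogonal, the projection Π̃ := I_K − V(Vᵀ diag(π)V)⁻¹Vᵀ diag(π) equals the zero matrix; and (ii) for every diagonal matrix G ∈ ℝ^{K×K} — in particular for G = diag((B∘(J−B))π) (dense regime) and G = diag(Bπ) (sparse regime) — the bias matrix Θ := G ν Δ⁻¹ I_{p,q} Δ⁻¹ νᵀ + ν Δ⁻¹ I_{p,q} Δ⁻¹ νᵀ G − ν Δ⁻¹ νᵀ diag(π) G ν Δ⁻¹ I_{p,q} Δ⁻¹ νᵀ − ν Δ⁻¹ I_{p,q} Δ⁻¹ νᵀ G diag(π) ν Δ⁻¹ νᵀ equals the zero matrix. -/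
open Matrix

noncomputable section

/-!
When `ν` is invertible, so is `Δ = νᵀ diag(π) ν`, and `N := ν Δ⁻¹ νᵀ` is exactly `diag(π)⁻¹`;
the same computation applies to the invertible orthogonal `V`, so `Π̃ = I − I = 0`. Writing
`Θ = G M + M G − N diag(π) G M − M G diag(π) N`, the last two terms are `G M` and `M G`.
-/

theorem Matrix.mul_nonsing_inv_mul_eq_one {n R : Type*} [Fintype n] [DecidableEq n]
    [CommRing R] {A C : Matrix n n R} (hA : IsUnit A.det) (hC : IsUnit C.det) :
    A * (C * A)⁻¹ * C = 1 := by
  rw [mul_inv_rev, ← Matrix.mul_assoc, mul_nonsing_inv _ hA, Matrix.one_mul,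
    nonsing_inv_mul _ hC]

theorem add_sub_sub_eq_zero_of_mul_eq_one {R : Type*} [Ring R] {N D : R} (hND : N * D = 1)
    (hDN : D * N = 1) (G M : R) : G * M + M * G - N * D * G * M - M * G * D * N = 0 := by
  rw [hND, one_mul, mul_assoc (M * G), hDN, mul_one]
  abel

theorem fullRank_bias_vanishes_general {K p : ℕ}
    (ν : Matrix (Fin K) (Fin K) ℝ) (hν : IsUnit ν.det)
    (π : Fin K → ℝ) (hπpos : ∀ k, 0 < π k) :
    (∀ V S : Matrix (Fin K) (Fin K) ℝ, V.transpose * V = 1 → ν = V * S →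
      (1 : Matrix (Fin K) (Fin K) ℝ) -
        V * (V.transpose * Matrix.diagonal π * V)⁻¹ * V.transpose *
          Matrix.diagonal π = 0)
    ∧
    (∀ g : Fin K → ℝ,
      (Matrix.diagonal g *
          (ν * (ν.transpose * Matrix.diagonal π * ν)⁻¹ *
            Matrix.diagonal (fun i : Fin K => if (i : ℕ) < p then (1 : ℝ) else -1) *
            (ν.transpose * Matrix.diagonal π * ν)⁻¹ * ν.transpose)
        + (ν * (ν.transpose * Matrix.diagonal π * ν)⁻¹ *
            Matrix.diagonal (fun i : Fin K => if (i : ℕ) < p then (1 : ℝ) else -1) *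
            (ν.transpose * Matrix.diagonal π * ν)⁻¹ * ν.transpose) * Matrix.diagonal g
        - (ν * (ν.transpose * Matrix.diagonal π * ν)⁻¹ * ν.transpose) *
            Matrix.diagonal π * Matrix.diagonal g *
            (ν * (ν.transpose * Matrix.diagonal π * ν)⁻¹ *
              Matrix.diagonal (fun i : Fin K => if (i : ℕ) < p then (1 : ℝ) else -1) *
              (ν.transpose * Matrix.diagonal π * ν)⁻¹ * ν.transpose)
        - (ν * (ν.transpose * Matrix.diagonal π * ν)⁻¹ *
            Matrix.diagonal (fun i : Fin K => if (i : ℕ) < p then (1 : ℝ) else -1) *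
            (ν.transpose * Matrix.diagonal π * ν)⁻¹ * ν.transpose) *
            Matrix.diagonal g * Matrix.diagonal π *
            (ν * (ν.transpose * Matrix.diagonal π * ν)⁻¹ * ν.transpose)) = 0) := by
  have hπ : IsUnit (diagonal π).det := by
    rw [det_diagonal]
    exact (Finset.prod_ne_zero_iff.mpr fun k _ => (hπpos k).ne').isUnit
  have key : ∀ A : Matrix (Fin K) (Fin K) ℝ, IsUnit A.det →
      A * (A.transpose * diagonal π * A)⁻¹ * A.transpose * diagonal π = 1 := fun A hA => by
    rw [Matrix.mul_assoc _ A.transpose]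
    exact mul_nonsing_inv_mul_eq_one hA (by rw [det_mul, det_transpose]; exact hA.mul hπ)
  have hN := key ν hν
  refine ⟨fun V S hV _ => ?_, fun g => add_sub_sub_eq_zero_of_mul_eq_one hN
    (mul_eq_one_comm.mp hN) _ _⟩
  rw [key V (isUnit_det_of_left_inverse hV), sub_self]

/-- if the block-connectivity matrix `B = ν I_{p,q} νᵀ` has full
rank `K` (so `ν` is an invertible `K × K` matrix), then (i) for any orthogonal
factor `V` (with `ν = V S`), the projection
`Π̃ = I_K − V (Vᵀ diag(π) V)⁻¹ Vᵀ diag(π)` vanishes, and (ii) for every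
diagonal matrix `G = diagonal g` — in particular for `G = diag((B∘(J−B))π)`
(dense regime) and `G = diag(Bπ)` (sparse regime) — the bias matrix
`Θ = G ν Δ⁻¹ I_{p,q} Δ⁻¹ νᵀ + ν Δ⁻¹ I_{p,q} Δ⁻¹ νᵀ G
  − ν Δ⁻¹ νᵀ diag(π) G ν Δ⁻¹ I_{p,q} Δ⁻¹ νᵀ
  − ν Δ⁻¹ I_{p,q} Δ⁻¹ νᵀ G diag(π) ν Δ⁻¹ νᵀ`
vanishes, where `Δ = νᵀ diag(π) ν`. -/
theorem fullRank_bias_vanishes {K p q : ℕ} (hK : 2 ≤ K) (hpq : p + q = K)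
    (ν : Matrix (Fin K) (Fin K) ℝ) (hν : IsUnit ν.det)
    (B : Matrix (Fin K) (Fin K) ℝ) (hBsym : B.IsSymm) (hBrank : B.rank = K)
    (hBfac : B = ν * Matrix.diagonal (fun i : Fin K =>
      if (i : ℕ) < p then (1 : ℝ) else -1) * ν.transpose)
    (π : Fin K → ℝ) (hπpos : ∀ k, 0 < π k) :
    (∀ V S : Matrix (Fin K) (Fin K) ℝ, V.transpose * V = 1 → ν = V * S →
      (1 : Matrix (Fin K) (Fin K) ℝ) -
        V * (V.transpose * Matrix.diagonal π * V)⁻¹ * V.transpose *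
          Matrix.diagonal π = 0)
    ∧
    (∀ g : Fin K → ℝ,
      (Matrix.diagonal g *
          (ν * (ν.transpose * Matrix.diagonal π * ν)⁻¹ *
            Matrix.diagonal (fun i : Fin K => if (i : ℕ) < p then (1 : ℝ) else -1) *
            (ν.transpose * Matrix.diagonal π * ν)⁻¹ * ν.transpose)
        + (ν * (ν.transpose * Matrix.diagonal π * ν)⁻¹ *
            Matrix.diagonal (fun i : Fin K => if (i : ℕ) < p then (1 : ℝ) else -1) *
            (ν.transpose * Matrix.diagonal π * ν)⁻¹ * ν.transpose) * Matrix.diagonal g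
        - (ν * (ν.transpose * Matrix.diagonal π * ν)⁻¹ * ν.transpose) *
            Matrix.diagonal π * Matrix.diagonal g *
            (ν * (ν.transpose * Matrix.diagonal π * ν)⁻¹ *
              Matrix.diagonal (fun i : Fin K => if (i : ℕ) < p then (1 : ℝ) else -1) *
              (ν.transpose * Matrix.diagonal π * ν)⁻¹ * ν.transpose)
        - (ν * (ν.transpose * Matrix.diagonal π * ν)⁻¹ *
            Matrix.diagonal (fun i : Fin K => if (i : ℕ) < p then (1 : ℝ) else -1) *
            (ν.transpose * Matrix.diagonal π * ν)⁻¹ * ν.transpose) *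
            Matrix.diagonal g * Matrix.diagonal π *
            (ν * (ν.transpose * Matrix.diagonal π * ν)⁻¹ * ν.transpose)) = 0) :=
  fullRank_bias_vanishes_general ν hν π hπpos

end
end

section
/- Let K = 2, let 0 < p, q < 1, and let B = v vᵀ with v = (p, q)ᵀ, a rank-one symmetric positive semidefinite matrix (so d = 1, one positive eigenvalue, I_{p,q} = 1, and one may take ν = v up to sign). Let π = (1/2, 1/2)ᵀ, Δ = vᵀ diag(π) v = (p² + q²)/2, and let Θ be the dense-regime bias matrix Θ := diag(Eπ) v Δ⁻² vᵀ + v Δ⁻² vᵀ diag(Eπ) − v Δ⁻¹ vᵀ diag(π) diag(Eπ) v Δ⁻² vᵀ − v Δ⁻² vᵀ diag(Eπ) diag(π) v Δ⁻¹ vᵀ with E = B ∘ (J − B). Then the diagonal entries of Θ satisfy Θ_11 = −Θ_22, and consequently the asymptotic bias of the spectral-based modularity vanishes: π̃ᵀ vech(Θ) = (Θ_11 + Θ_22)/4 = 0. -/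
open Matrix
open scoped BigOperators

noncomputable section

/-- Index set for the half-vectorization (vech) of `K × K` symmetric matrices:
pairs `(k, l)` with `l ≤ k`. -/
abbrev VechIdx (K : ℕ) := {p : Fin K × Fin K // p.2 ≤ p.1}

/-- Half-vectorization of a `K × K` matrix. -/
def vech {K : ℕ} (M : Matrix (Fin K) (Fin K) ℝ) : VechIdx K → ℝ :=
  fun p => M p.1.1 p.1.2

/-- The vector `π̃ = vech(diag(π_1², …, π_K²))`. -/
def pitilde {K : ℕ} (π : Fin K → ℝ) : VechIdx K → ℝ :=
  vech (Matrix.diagonal fun k => π k ^ 2)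

/-- The dense-regime bias matrix for the two-block rank-one model `B = v vᵀ`
with `v = (p, q)ᵀ`, balanced communities `π = (1/2, 1/2)ᵀ`, scalar
`Δ = (p² + q²)/2` and `E = B ∘ (J − B)`:
`Θ = diag(Eπ) v Δ⁻² vᵀ + v Δ⁻² vᵀ diag(Eπ)
  − v Δ⁻¹ vᵀ diag(π) diag(Eπ) v Δ⁻² vᵀ − v Δ⁻² vᵀ diag(Eπ) diag(π) v Δ⁻¹ vᵀ`. -/
def thetaRankOne (p q : ℝ) : Matrix (Fin 2) (Fin 2) ℝ :=
  let v : Fin 2 → ℝ := ![p, q]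
  let π : Fin 2 → ℝ := ![1 / 2, 1 / 2]
  let B : Matrix (Fin 2) (Fin 2) ℝ := Matrix.vecMulVec v v
  let E : Matrix (Fin 2) (Fin 2) ℝ := B ⊙ ((Matrix.of fun _ _ => (1 : ℝ)) - B)
  let Δ : ℝ := (p ^ 2 + q ^ 2) / 2
  (Δ⁻¹ * Δ⁻¹) • (Matrix.diagonal (E *ᵥ π) * Matrix.vecMulVec v v)
    + (Δ⁻¹ * Δ⁻¹) • (Matrix.vecMulVec v v * Matrix.diagonal (E *ᵥ π))
    - (Δ⁻¹ * Δ⁻¹ * Δ⁻¹) •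
        (Matrix.vecMulVec v v * Matrix.diagonal π * Matrix.diagonal (E *ᵥ π) *
          Matrix.vecMulVec v v)
    - (Δ⁻¹ * Δ⁻¹ * Δ⁻¹) •
        (Matrix.vecMulVec v v * Matrix.diagonal (E *ᵥ π) * Matrix.diagonal π *
          Matrix.vecMulVec v v)

/-!
With `c = ∑ i, πᵢ eᵢ vᵢ²`, the two cubic terms of `Θ` are both `Δ⁻³ (vᵀ diag(π e) v) v vᵀ`,
so `Θ = Δ⁻² (diag(e) v vᵀ + v vᵀ diag(e)) - 2 Δ⁻³ c v vᵀ`. Its `π`-weighted diagonal sum is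
therefore `2 Δ⁻² c - 2 Δ⁻³ c (vᵀ diag(π) v) = 0`, whatever `E` is. For `π = (1/2, 1/2)` this
sum is `(Θ₁₁ + Θ₂₂)/2`, and `π̃ᵀ vech(Θ)` only sees the diagonal of `Θ`, weighted by `πₖ²`.
-/

theorem pitilde_dotProduct_vech {K : ℕ} (π : Fin K → ℝ) (M : Matrix (Fin K) (Fin K) ℝ) :
    pitilde π ⬝ᵥ vech M = ∑ k, π k ^ 2 * M k k := by
  symm
  refine Fintype.sum_of_injective (fun k => ⟨(k, k), le_rfl⟩) ?_ _ _ ?_ ?_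
  · intro k l hkl
    simpa using congrArg (fun x : VechIdx K => x.1.1) hkl
  · rintro ⟨⟨k, l⟩, hlk⟩ hoff
    have hkl : k ≠ l := fun h => hoff ⟨k, by simp [h]⟩
    simp [pitilde, vech, diagonal_apply_ne _ hkl]
  · intro k
    simp [pitilde, vech]

theorem vecMulVec_mul_mul_vecMulVec {R l m k n : Type*} [CommSemiring R] [Fintype m]
    [Fintype k] (u : l → R) (v : m → R) (M : Matrix m k R) (w : k → R) (x : n → R) :
    vecMulVec u v * M * vecMulVec w x = (v ⬝ᵥ M *ᵥ w) • vecMulVec u x := by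
  rw [Matrix.mul_assoc, mul_vecMulVec, vecMulVec_mul_vecMulVec, vecMulVec_smul]

section BiasMatrix

variable {R n : Type*} [Field R] [Fintype n] [DecidableEq n]

/-- `Θ` for `B = v vᵀ`, with `e` in the role of `Eπ`. -/
def rankOneBiasMatrix (v π e : n → R) (Δ : R) : Matrix n n R :=
  (Δ⁻¹ * Δ⁻¹) • (diagonal e * vecMulVec v v)
    + (Δ⁻¹ * Δ⁻¹) • (vecMulVec v v * diagonal e)
    - (Δ⁻¹ * Δ⁻¹ * Δ⁻¹) • (vecMulVec v v * diagonal π * diagonal e * vecMulVec v v)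
    - (Δ⁻¹ * Δ⁻¹ * Δ⁻¹) • (vecMulVec v v * diagonal e * diagonal π * vecMulVec v v)

theorem sum_mul_rankOneBiasMatrix_diag_eq_zero (v π e : n → R) {Δ : R}
    (hΔ : ∑ i, π i * v i ^ 2 = Δ) :
    ∑ i, π i * rankOneBiasMatrix v π e Δ i i = 0 := by
  set c := ∑ i, π i * e i * v i ^ 2
  have hquad : v ⬝ᵥ (diagonal π * diagonal e) *ᵥ v = c := by
    simp only [← mulVec_mulVec, mulVec_diagonal, dotProduct, c]
    exact Finset.sum_congr rfl fun i _ => by ring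
  have hΘ : rankOneBiasMatrix v π e Δ = (Δ⁻¹ * Δ⁻¹) • (diagonal e * vecMulVec v v
      + vecMulVec v v * diagonal e) - (2 * Δ⁻¹ * Δ⁻¹ * Δ⁻¹ * c) • vecMulVec v v := by
    rw [rankOneBiasMatrix, Matrix.mul_assoc _ (diagonal π), Matrix.mul_assoc _ (diagonal e),
      (commute_diagonal e π).eq, vecMulVec_mul_mul_vecMulVec, hquad]
    module
  have hdiag : ∀ i, rankOneBiasMatrix v π e Δ i i
      = 2 * Δ⁻¹ * Δ⁻¹ * (e i * v i ^ 2) - 2 * Δ⁻¹ * Δ⁻¹ * Δ⁻¹ * c * v i ^ 2 := by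
    intro i
    simp only [hΘ, Matrix.sub_apply, Matrix.smul_apply, Matrix.add_apply, diagonal_mul,
      mul_diagonal, vecMulVec_apply, smul_eq_mul]
    ring
  calc ∑ i, π i * rankOneBiasMatrix v π e Δ i i
      = ∑ i, 2 * Δ⁻¹ * Δ⁻¹ * (π i * e i * v i ^ 2)
        - ∑ i, 2 * Δ⁻¹ * Δ⁻¹ * Δ⁻¹ * c * (π i * v i ^ 2) := by
        rw [← Finset.sum_sub_distrib]
        exact Finset.sum_congr rfl fun i _ => by rw [hdiag]; ring
    _ = 2 * Δ⁻¹ * Δ⁻¹ * c - 2 * Δ⁻¹ * Δ⁻¹ * Δ⁻¹ * c * Δ := by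
        rw [← Finset.mul_sum, ← Finset.mul_sum, hΔ]
    _ = 0 := by
        -- at `Δ = 0` both terms are `0` because `0⁻¹ = 0`
        rcases eq_or_ne Δ 0 with rfl | hΔ0
        · simp
        · field_simp
          ring

end BiasMatrix

theorem rank_one_balanced_bias_cancels_general (p q : ℝ) :
    thetaRankOne p q 1 1 = -(thetaRankOne p q 0 0)
    ∧ pitilde (![1 / 2, 1 / 2] : Fin 2 → ℝ) ⬝ᵥ vech (thetaRankOne p q) =
        (thetaRankOne p q 0 0 + thetaRankOne p q 1 1) / 4
    ∧ pitilde (![1 / 2, 1 / 2] : Fin 2 → ℝ) ⬝ᵥ vech (thetaRankOne p q) = 0 := by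
  have hcancel : ∑ i, ![1 / 2, 1 / 2] i * thetaRankOne p q i i = 0 :=
    sum_mul_rankOneBiasMatrix_diag_eq_zero ![p, q] _ _ (by simp [Fin.sum_univ_two]; ring)
  have hdot := pitilde_dotProduct_vech ![1 / 2, 1 / 2] (thetaRankOne p q)
  simp only [Fin.sum_univ_two, cons_val_zero, cons_val_one] at hcancel hdot
  exact ⟨by linarith, by rw [hdot]; ring, by rw [hdot]; linarith⟩

/-- for the balanced two-block rank-one model, the diagonal
entries of the dense-regime bias matrix `Θ` cancel (`Θ_11 = −Θ_22`), and hence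
the asymptotic bias of the spectral-based modularity vanishes:
`π̃ᵀ vech(Θ) = (Θ_11 + Θ_22)/4 = 0`. -/
theorem rank_one_balanced_bias_cancels (p q : ℝ)
    (hp : 0 < p ∧ p < 1) (hq : 0 < q ∧ q < 1) :
    thetaRankOne p q 1 1 = -(thetaRankOne p q 0 0)
    ∧ pitilde (![1 / 2, 1 / 2] : Fin 2 → ℝ) ⬝ᵥ vech (thetaRankOne p q) =
        (thetaRankOne p q 0 0 + thetaRankOne p q 1 1) / 4
    ∧ pitilde (![1 / 2, 1 / 2] : Fin 2 → ℝ) ⬝ᵥ vech (thetaRankOne p q) = 0 :=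
  rank_one_balanced_bias_cancels_general p q

end
end
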